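/- arXiv:2011.10677 — 9 statements merged into one kernel-verified Lean document; each statement's English description precedes it below -/
import Mathlib

section
/- Every self-saturated polymer is a nonnegative integer combination of unsplittable self-saturated polymers: for every self-saturated polymer p : Fin m → ℕ there exists a multiset D of polymers, each element of which is unsplittable and self-saturated, such that the sum of the elements of D equals p. (This is the generating half of Theorem 1: the polymer basis B_A generates all integer points of the cone {x : x ≥ 0 and A·x ≥ 0}.) -/
/-- A polymer `p` (vector of monomer counts) is self-saturated if the net count of
every unstarred site type is nonnegative, i.e. `A · p ≥ 0`. -/
def SelfSaturated {m n : ℕ} (A : Matrix (Fin n) (Fin m) ℤ) (p : Fin m → ℕ) : Prop :=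
  ∀ i : Fin n, 0 ≤ A.mulVec (fun j => (p j : ℤ)) i

/-- A nonzero self-saturated polymer is unsplittable if it cannot be written as the sum
of two nonzero self-saturated polymers. -/
def Unsplittable {m n : ℕ} (A : Matrix (Fin n) (Fin m) ℤ) (p : Fin m → ℕ) : Prop :=
  p ≠ 0 ∧ SelfSaturated A p ∧
    ¬ ∃ q r : Fin m → ℕ, q ≠ 0 ∧ r ≠ 0 ∧ SelfSaturated A q ∧ SelfSaturated A r ∧ p = q + r

private lemma sum_pos_of_ne_zero {m : ℕ} {p : Fin m → ℕ} (h : p ≠ 0) : 0 < ∑ j, p j := by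
  rcases Nat.eq_zero_or_pos (∑ j, p j) with h0 | h0
  · exfalso; apply h; funext j
    exact Finset.sum_eq_zero_iff.mp h0 j (Finset.mem_univ j)
  · exact h0

private lemma stmt0_aux {m n : ℕ} (A : Matrix (Fin n) (Fin m) ℤ) :
    ∀ N : ℕ, ∀ p : Fin m → ℕ, ∑ j, p j = N → SelfSaturated A p →
    ∃ D : Multiset (Fin m → ℕ), (∀ q ∈ D, Unsplittable A q) ∧ D.sum = p := by
  intro N
  induction N using Nat.strong_induction_on with
  | _ N ih =>
    intro p hN hp
    by_cases hz : p = 0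
    · exact ⟨0, by simp, by simp [hz]⟩
    by_cases hu : ∃ q r : Fin m → ℕ, q ≠ 0 ∧ r ≠ 0 ∧ SelfSaturated A q ∧ SelfSaturated A r ∧ p = q + r
    · obtain ⟨q, r, hq0, hr0, hqs, hrs, hsum⟩ := hu
      have hsplit : (∑ j, q j) + (∑ j, r j) = N := by
        rw [← hN, hsum]; simp [Finset.sum_add_distrib]
      have hqpos := sum_pos_of_ne_zero hq0
      have hrpos := sum_pos_of_ne_zero hr0
      obtain ⟨Dq, hDq, hDqs⟩ := ih (∑ j, q j) (by omega) q rfl hqs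
      obtain ⟨Dr, hDr, hDrs⟩ := ih (∑ j, r j) (by omega) r rfl hrs
      refine ⟨Dq + Dr, ?_, by simp [hDqs, hDrs, hsum]⟩
      intro x hx
      rcases Multiset.mem_add.mp hx with h | h
      · exact hDq x h
      · exact hDr x h
    · exact ⟨{p}, by intro x hx; simp at hx; subst hx; exact ⟨hz, hp, hu⟩, by simp⟩

/-- Every self-saturated polymer is a sum of a multiset of unsplittable self-saturated
polymers (the generating half of Theorem 1). -/
theorem stmt0 {m n : ℕ} (A : Matrix (Fin n) (Fin m) ℤ) (p : Fin m → ℕ)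
    (hp : SelfSaturated A p) :
    ∃ D : Multiset (Fin m → ℕ), (∀ q ∈ D, Unsplittable A q) ∧ D.sum = p := by
  exact stmt0_aux A (∑ j, p j) p rfl hp
end

section
/- Minimality half of Theorem 1: if S is any set of self-saturated polymers such that every self-saturated polymer p : Fin m → ℕ is the sum of some multiset of elements of S, then every unsplittable self-saturated polymer belongs to S; that is, B_A ⊆ S. Consequently no element can be removed from B_A while it remains a generating set. -/
lemma sat_add {m n : ℕ} {A : Matrix (Fin n) (Fin m) ℤ} {q r : Fin m → ℕ}
    (hq : SelfSaturated A q) (hr : SelfSaturated A r) : SelfSaturated A (q + r) := by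
  intro i
  have : (fun j => (((q + r) j : ℕ) : ℤ)) = (fun j => (q j : ℤ)) + (fun j => (r j : ℤ)) := by
    funext j; simp [Pi.add_apply]
  rw [this, Matrix.mulVec_add]
  exact add_nonneg (hq i) (hr i)

lemma sat_sum {m n : ℕ} {A : Matrix (Fin n) (Fin m) ℤ} (D : Multiset (Fin m → ℕ))
    (h : ∀ q ∈ D, SelfSaturated A q) : SelfSaturated A D.sum := by
  induction D using Multiset.induction_on with
  | empty => intro i; simp [Matrix.mulVec]
  | cons a D ih =>
    rw [Multiset.sum_cons]
    exact sat_add (h a (Multiset.mem_cons_self a D))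
      (ih fun q hq => h q (Multiset.mem_cons_of_mem hq))

/-- Minimality half of Theorem 1: any set of self-saturated polymers that generates all
self-saturated polymers (as multiset sums) must contain every unsplittable self-saturated
polymer. -/
theorem stmt1 {m n : ℕ} (A : Matrix (Fin n) (Fin m) ℤ) (S : Set (Fin m → ℕ))
    (hSsat : ∀ p ∈ S, SelfSaturated A p)
    (hGen : ∀ p : Fin m → ℕ, SelfSaturated A p →
      ∃ D : Multiset (Fin m → ℕ), (∀ q ∈ D, q ∈ S) ∧ D.sum = p)
    (p : Fin m → ℕ) (hp : Unsplittable A p) : p ∈ S := by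
  obtain ⟨hne, hsat, hsplit⟩ := hp
  obtain ⟨D, hDS, hDsum⟩ := hGen p hsat
  clear hGen
  induction D using Multiset.induction_on with
  | empty => simp at hDsum; exact absurd hDsum.symm hne
  | cons a D ih =>
    rw [Multiset.sum_cons] at hDsum
    by_cases ha : a = 0
    · exact ih (fun q hq => hDS q (Multiset.mem_cons_of_mem hq))
        (by simpa [ha] using hDsum)
    · by_cases hD : D.sum = 0
      · have : p = a := by rw [← hDsum, hD, add_zero]
        exact this ▸ hDS a (Multiset.mem_cons_self a D)
      · exact absurd ⟨a, D.sum, ha, hD,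
          hSsat a (hDS a (Multiset.mem_cons_self a D)),
          sat_sum D (fun q hq => hSsat q (hDS q (Multiset.mem_cons_of_mem hq))),
          hDsum.symm⟩ hsplit
end

section
/- The polymer basis is finite: the set B_A of all unsplittable self-saturated polymers p : Fin m → ℕ is a finite set. (This is the Gordan/Hilbert-basis finiteness underlying the paper's claim that the set of polymers that can exist in locally stable configurations is finite.) -/
/-!
Dickson's lemma: `ℕ^m × ℕ^n` is well-quasi-ordered, so every antichain in it is finite.
Send a self-saturated polymer `p` to `(p, A p)`. If `(p, A p) ≤ (q, A q)` for distinct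
unsplittable `p` and `q`, then `q = p + (q - p)` with `A (q - p) = A q - A p ≥ 0` splits `q`.
Hence unsplittable polymers map injectively onto an antichain, which is finite.
-/

-- `toNat` loses nothing on self-saturated polymers, whose balances are nonnegative.
def siteBalance {m n : ℕ} (A : Matrix (Fin n) (Fin m) ℤ) (p : Fin m → ℕ) :
    (Fin m → ℕ) × (Fin n → ℕ) :=
  (p, fun i => (A.mulVec (fun j => (p j : ℤ)) i).toNat)

lemma siteBalance_injective {m n : ℕ} (A : Matrix (Fin n) (Fin m) ℤ) :
    Function.Injective (siteBalance A) :=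
  fun _ _ h => congrArg Prod.fst h

lemma SelfSaturated.tsub {m n : ℕ} {A : Matrix (Fin n) (Fin m) ℤ} {p q : Fin m → ℕ}
    (hq : SelfSaturated A q) (hle : siteBalance A p ≤ siteBalance A q) :
    SelfSaturated A (q - p) := by
  intro i
  have hpq : p ≤ q := hle.1
  have hcast :
      (fun j => (((q - p) j : ℕ) : ℤ)) = (fun j => (q j : ℤ)) - fun j => (p j : ℤ) := by
    funext j
    exact Nat.cast_sub (hpq j)
  have hbal := hle.2 i
  have hqi := hq i
  simp only [siteBalance] at hbal
  rw [hcast, Matrix.mulVec_sub, Pi.sub_apply]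
  omega

lemma Unsplittable.eq_of_siteBalance_le {m n : ℕ} {A : Matrix (Fin n) (Fin m) ℤ}
    {p q : Fin m → ℕ} (hp : Unsplittable A p) (hq : Unsplittable A q)
    (hle : siteBalance A p ≤ siteBalance A q) : p = q := by
  obtain ⟨hp0, hpsat, -⟩ := hp
  obtain ⟨-, hqsat, hq_unsplit⟩ := hq
  have hpq : p ≤ q := hle.1
  by_contra hne
  refine hq_unsplit ⟨p, q - p, hp0, ?_, hpsat, hqsat.tsub hle, ?_⟩
  · exact fun h => hne (le_antisymm hpq (tsub_eq_zero_iff_le.mp h))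
  · exact (add_tsub_cancel_of_le hpq).symm

lemma isAntichain_siteBalance_image {m n : ℕ} (A : Matrix (Fin n) (Fin m) ℤ) :
    IsAntichain (· ≤ ·) (siteBalance A '' {p | Unsplittable A p}) := by
  rintro _ ⟨p, hp, rfl⟩ _ ⟨q, hq, rfl⟩ hne hle
  exact hne (congrArg _ (hp.eq_of_siteBalance_le hq hle))

/-- The polymer basis is finite. -/
theorem stmt3 {m n : ℕ} (A : Matrix (Fin n) (Fin m) ℤ) :
    {p : Fin m → ℕ | Unsplittable A p}.Finite :=
  ((isAntichain_siteBalance_image A).finite_of_partiallyWellOrderedOn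
    (Set.isPWO_of_wellQuasiOrderedLE _)).of_finite_image
    (siteBalance_injective A).injOn
end

section
/- Every saturated configuration is obtained by merging polymers of a locally stable configuration: if γ is a saturated configuration of a TBN T with starred sites limiting, then there exists a saturated configuration δ of T, all of whose polymers are unsplittable, that refines γ, i.e., there is a function assigning to each polymer P of γ a multiset of unsplittable self-saturated polymers summing to P, and δ is the union of these multisets. -/
lemma pos_total {m : ℕ} {p : Fin m → ℕ} (hp : p ≠ 0) :
    0 < (Finset.univ.sum p) := by
  rcases Function.ne_iff.mp hp with ⟨j, hj⟩
  exact Finset.sum_pos' (fun _ _ => Nat.zero_le _) ⟨j, Finset.mem_univ j,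
    Nat.pos_of_ne_zero hj⟩

lemma decompose {m n : ℕ} (A : Matrix (Fin n) (Fin m) ℤ) :
    ∀ N (p : Fin m → ℕ), Finset.univ.sum p ≤ N → p ≠ 0 → SelfSaturated A p →
      ∃ s : Multiset (Fin m → ℕ), (∀ q ∈ s, Unsplittable A q) ∧ s.sum = p := by
  intro N
  induction N with
  | zero =>
    intro p hle hp _
    have := pos_total hp; omega
  | succ N ih =>
    intro p hle hp hsat
    by_cases hu : Unsplittable A p
    · exact ⟨{p}, by simpa using hu, by simp⟩
    · have hsplit : ∃ q r : Fin m → ℕ, q ≠ 0 ∧ r ≠ 0 ∧ SelfSaturated A q ∧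
          SelfSaturated A r ∧ p = q + r := by
        by_contra hc
        exact hu ⟨hp, hsat, hc⟩
      obtain ⟨q, r, hq0, hr0, hqs, hrs, hpqr⟩ := hsplit
      have hsumeq : Finset.univ.sum q + Finset.univ.sum r = Finset.univ.sum p := by
        rw [hpqr, ← Finset.sum_add_distrib]; rfl
      have hqN : Finset.univ.sum q ≤ N := by
        have := pos_total hr0; omega
      have hrN : Finset.univ.sum r ≤ N := by
        have := pos_total hq0; omega
      obtain ⟨sq, hsq, hsqsum⟩ := ih q hqN hq0 hqs
      obtain ⟨sr, hsr, hsrsum⟩ := ih r hrN hr0 hrs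
      refine ⟨sq + sr, ?_, by rw [Multiset.sum_add, hsqsum, hsrsum, hpqr]⟩
      intro x hx
      rcases Multiset.mem_add.mp hx with h | h
      · exact hsq x h
      · exact hsr x h

/-- Every saturated configuration is obtained by merging polymers of a locally stable
(all-unsplittable) saturated configuration: there is a refinement assigning to each
polymer of γ a multiset of unsplittable self-saturated polymers summing to it, whose
union δ = γ.bind f is a saturated configuration of T consisting of unsplittable polymers. -/
theorem stmt6 {m n : ℕ} (A : Matrix (Fin n) (Fin m) ℤ) (T : Fin m → ℕ)
    (hT : SelfSaturated A T)
    (γ : Multiset (Fin m → ℕ))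
    (hne : ∀ P ∈ γ, P ≠ 0) (hsum : γ.sum = T)
    (hsat : ∀ P ∈ γ, SelfSaturated A P) :
    ∃ f : (Fin m → ℕ) → Multiset (Fin m → ℕ),
      (∀ P ∈ γ, (∀ q ∈ f P, Unsplittable A q) ∧ (f P).sum = P) ∧
      (γ.bind f).sum = T ∧
      (∀ q ∈ γ.bind f, Unsplittable A q) := by
  classical
  set f : (Fin m → ℕ) → Multiset (Fin m → ℕ) := fun P =>
    if h : P ≠ 0 ∧ SelfSaturated A P then
      (decompose A (Finset.univ.sum P) P le_rfl h.1 h.2).choose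
    else {P} with hf
  have key : ∀ P ∈ γ, (∀ q ∈ f P, Unsplittable A q) ∧ (f P).sum = P := by
    intro P hP
    have h : P ≠ 0 ∧ SelfSaturated A P := ⟨hne P hP, hsat P hP⟩
    have := (decompose A (Finset.univ.sum P) P le_rfl h.1 h.2).choose_spec
    simpa [hf, h] using this
  refine ⟨f, key, ?_, ?_⟩
  · rw [Multiset.sum_bind]
    rw [show (γ.map fun P => (f P).sum) = γ.map id from
      Multiset.map_congr rfl (fun P hP => (key P hP).2)]
    simpa using hsum
  · intro q hq
    rcases Multiset.mem_bind.mp hq with ⟨P, hP, hqP⟩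
    exact ((key P hP).1) q hqP
end

section
/- Correctness of the basis-based integer program for stable configurations: for a TBN T with starred sites limiting, the maximum cardinality of a saturated configuration of T equals the maximum of ∑_b c(b) over finitely supported functions c : (Fin m → ℕ) → ℕ supported on unsplittable self-saturated polymers and satisfying ∑_b c(b) • b = T (both maxima taken over the same nonempty finite range of achievable values; in particular, some saturated configuration of maximum cardinality consists entirely of unsplittable polymers). -/
lemma card_le_sum {m : ℕ} (γ : Multiset (Fin m → ℕ)) (h : ∀ P ∈ γ, P ≠ 0) :
    Multiset.card γ ≤ ∑ j, γ.sum j := by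
  induction γ using Multiset.induction with
  | empty => simp
  | cons P s ih =>
    have h1 : 1 ≤ ∑ j, P j := by
      rcases Nat.eq_zero_or_pos (∑ j, P j) with h0 | h0
      · exact absurd (funext fun j => (Finset.sum_eq_zero_iff.mp h0) j (Finset.mem_univ j))
          (h P (Multiset.mem_cons_self _ _))
      · exact h0
    have h2 := ih (fun Q hQ => h Q (Multiset.mem_cons_of_mem hQ))
    have : ∑ j, (P ::ₘ s).sum j = (∑ j, P j) + ∑ j, s.sum j := by
      simp [Multiset.sum_cons, Finset.sum_add_distrib, Pi.add_apply]
    rw [Multiset.card_cons, this]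
    omega


/-- Correctness of the basis-based integer program for stable configurations: the maximum
cardinality of a saturated configuration of T equals the maximum of the total count of a
finitely supported multiplicity vector c on unsplittable self-saturated polymers with
∑ c(b) • b = T; moreover some maximum-cardinality saturated configuration consists
entirely of unsplittable polymers. -/
theorem stmt7 {m n : ℕ} (A : Matrix (Fin n) (Fin m) ℤ) (T : Fin m → ℕ)
    (hT : SelfSaturated A T) :
    ∃ N : ℕ,
      IsGreatest {k : ℕ | ∃ γ : Multiset (Fin m → ℕ),
        (∀ P ∈ γ, P ≠ 0) ∧ γ.sum = T ∧ (∀ P ∈ γ, SelfSaturated A P) ∧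
        Multiset.card γ = k} N ∧
      IsGreatest {k : ℕ | ∃ c : (Fin m → ℕ) →₀ ℕ,
        (∀ b ∈ c.support, Unsplittable A b) ∧
        (c.sum fun b v => v • b) = T ∧
        (c.sum fun _ v => v) = k} N ∧
      (∃ γ : Multiset (Fin m → ℕ),
        (∀ P ∈ γ, P ≠ 0) ∧ γ.sum = T ∧ (∀ P ∈ γ, SelfSaturated A P) ∧
        Multiset.card γ = N ∧ ∀ P ∈ γ, Unsplittable A P) := by
  classical
  set S : Set ℕ := {k : ℕ | ∃ γ : Multiset (Fin m → ℕ),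
    (∀ P ∈ γ, P ≠ 0) ∧ γ.sum = T ∧ (∀ P ∈ γ, SelfSaturated A P) ∧
    Multiset.card γ = k} with hS
  have hne : S.Nonempty := by
    by_cases hT0 : T = 0
    · exact ⟨0, 0, by simp, by simp [hT0], by simp, by simp⟩
    · exact ⟨1, {T}, by simpa using hT0, by simp, by simpa using hT, by simp⟩
  have hbdd : BddAbove S := by
    refine ⟨∑ j, T j, fun k hk => ?_⟩
    obtain ⟨γ, hγ0, hγs, -, hγc⟩ := hk
    rw [← hγc, ← hγs]
    exact card_le_sum γ hγ0
  set N := sSup S with hN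
  have hG1 : IsGreatest S N := ⟨Nat.sSup_mem hne hbdd, fun _ hx => le_csSup hbdd hx⟩
  obtain ⟨γ₀, hγ0, hγs, hγsat, hγc⟩ := hG1.1
  -- every polymer in γ₀ is unsplittable
  have hunsp : ∀ P ∈ γ₀, Unsplittable A P := by
    intro P hP
    refine ⟨hγ0 P hP, hγsat P hP, ?_⟩
    rintro ⟨q, r, hq0, hr0, hqs, hrs, hqr⟩
    have hmem : N + 1 ∈ S := by
      refine ⟨q ::ₘ r ::ₘ γ₀.erase P, ?_, ?_, ?_, ?_⟩
      · intro Q hQ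
        rcases Multiset.mem_cons.mp hQ with h | hQ
        · exact h ▸ hq0
        rcases Multiset.mem_cons.mp hQ with h | hQ
        · exact h ▸ hr0
        · exact hγ0 Q (Multiset.mem_of_mem_erase hQ)
      · have := Multiset.cons_erase hP
        calc (q ::ₘ r ::ₘ γ₀.erase P).sum = q + (r + (γ₀.erase P).sum) := by
              simp [Multiset.sum_cons]
          _ = (q + r) + (γ₀.erase P).sum := by ring
          _ = P + (γ₀.erase P).sum := by rw [hqr]
          _ = (P ::ₘ γ₀.erase P).sum := (Multiset.sum_cons _ _).symm
          _ = γ₀.sum := by rw [this]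
          _ = T := hγs
      · intro Q hQ
        rcases Multiset.mem_cons.mp hQ with h | hQ
        · exact h ▸ hqs
        rcases Multiset.mem_cons.mp hQ with h | hQ
        · exact h ▸ hrs
        · exact hγsat Q (Multiset.mem_of_mem_erase hQ)
      · have h := congrArg Multiset.card (Multiset.cons_erase hP)
        simp only [Multiset.card_cons] at h ⊢
        omega
    have := hG1.2 hmem
    omega
  refine ⟨N, hG1, ⟨⟨γ₀.toFinsupp, ?_, ?_, ?_⟩, ?_⟩, γ₀, hγ0, hγs, hγsat, hγc, hunsp⟩
  · intro b hb
    exact hunsp b (Multiset.mem_toFinset.mp (by rw [← Multiset.toFinsupp_support]; exact hb))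
  · have : (Multiset.toFinsupp γ₀).sum (fun b v => v • b)
        = (Finsupp.toMultiset (Multiset.toFinsupp γ₀)).sum := (Finsupp.sum_toMultiset _).symm
    rw [this, Multiset.toFinsupp_toMultiset, hγs]
  · have : (Multiset.toFinsupp γ₀).sum (fun _ v => v)
        = Multiset.card (Finsupp.toMultiset (Multiset.toFinsupp γ₀)) :=
      (Finsupp.card_toMultiset _).symm
    rw [this, Multiset.toFinsupp_toMultiset, hγc]
  · rintro k ⟨c, hcsupp, hcsum, hck⟩
    refine hG1.2 ⟨Finsupp.toMultiset c, ?_, ?_, ?_, ?_⟩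
    · intro P hP
      exact (hcsupp P ((Finsupp.mem_toMultiset _ _).mp hP)).1
    · rw [Finsupp.sum_toMultiset, hcsum]
    · intro P hP
      exact (hcsupp P ((Finsupp.mem_toMultiset _ _).mp hP)).2.1
    · rw [Finsupp.card_toMultiset]
      exact hck
end

section
/- In a stable (merge-minimal saturated) configuration, every non-singleton polymer contains a limiting monomer: if γ is a saturated configuration of T that minimizes the number of merges m(γ) among all saturated configurations of T, then every polymer P ∈ γ with |P| ≥ 2 satisfies: there exists j : Fin m with P j ≥ 1 and A i j < 0 for some i : Fin n. -/
/-- The number of merges of a configuration: the sum over its polymers of (size − 1). -/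
def merges {m : ℕ} (γ : Multiset (Fin m → ℕ)) : ℕ :=
  (γ.map (fun P => (∑ j, P j) - 1)).sum

/-- In a merge-minimal saturated configuration, every non-singleton polymer contains a
limiting monomer. -/
theorem stmt8 {m n : ℕ} (A : Matrix (Fin n) (Fin m) ℤ) (T : Fin m → ℕ)
    (hT : SelfSaturated A T)
    (γ : Multiset (Fin m → ℕ))
    (hne : ∀ P ∈ γ, P ≠ 0) (hsum : γ.sum = T)
    (hsat : ∀ P ∈ γ, SelfSaturated A P)
    (hmin : ∀ γ' : Multiset (Fin m → ℕ),
      (∀ P ∈ γ', P ≠ 0) → γ'.sum = T → (∀ P ∈ γ', SelfSaturated A P) →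
      merges γ ≤ merges γ')
    (P : Fin m → ℕ) (hP : P ∈ γ) (h2 : 2 ≤ ∑ j, P j) :
    ∃ j : Fin m, 1 ≤ P j ∧ ∃ i : Fin n, A i j < 0 := by
  by_contra hcon
  push_neg at hcon
  -- hcon : ∀ j, 1 ≤ P j → ∀ i, 0 ≤ A i j
  set δ : Multiset (Fin m → ℕ) :=
    (Finset.univ.val.bind fun j : Fin m => Multiset.replicate (P j) (Pi.single j 1)) with hδ
  have hδmem : ∀ Q ∈ δ, ∃ j : Fin m, 1 ≤ P j ∧ Q = Pi.single j 1 := by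
    intro Q hQ
    rw [hδ, Multiset.mem_bind] at hQ
    obtain ⟨j, _, hj2⟩ := hQ
    rw [Multiset.eq_of_mem_replicate hj2]
    refine ⟨j, ?_, rfl⟩
    by_contra hz
    have : P j = 0 := by omega
    simp [this] at hj2
  have hδsum : δ.sum = P := by
    rw [hδ, Multiset.sum_bind]
    have : ∀ j : Fin m, (Multiset.replicate (P j) (Pi.single j 1 : Fin m → ℕ)).sum
        = Pi.single j (P j) := by
      intro j
      rw [Multiset.sum_replicate]
      funext k
      by_cases hk : k = j <;> simp [hk, Pi.single_apply]
    have h2' : (Finset.univ.val.map fun j : Fin m =>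
        (Multiset.replicate (P j) (Pi.single j 1 : Fin m → ℕ)).sum).sum
        = ∑ j : Fin m, Pi.single j (P j) := by
      rw [Finset.sum]
      congr 1
      exact Multiset.map_congr rfl (fun j _ => this j)
    rw [h2', Finset.univ_sum_single]
  set γ' : Multiset (Fin m → ℕ) := γ.erase P + δ with hγ'
  clear_value δ γ'
  have hcons : γ = P ::ₘ γ.erase P := (Multiset.cons_erase hP).symm
  have hne' : ∀ Q ∈ γ', Q ≠ 0 := by
    intro Q hQ
    rw [hγ', Multiset.mem_add] at hQ
    rcases hQ with hQ | hQ
    · exact hne Q (Multiset.mem_of_mem_erase hQ)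
    · obtain ⟨j, _, rfl⟩ := hδmem Q hQ
      intro h0
      have := congrFun h0 j
      simp at this
  have hgsum : γ.sum = P + (γ.erase P).sum := by
    conv_lhs => rw [hcons]
    rw [Multiset.sum_cons]
  have hsum' : γ'.sum = T := by
    rw [hγ', Multiset.sum_add, hδsum, ← hsum, hgsum, add_comm]
  have hsat' : ∀ Q ∈ γ', SelfSaturated A Q := by
    intro Q hQ
    rw [hγ', Multiset.mem_add] at hQ
    rcases hQ with hQ | hQ
    · exact hsat Q (Multiset.mem_of_mem_erase hQ)
    · obtain ⟨j, hj1, rfl⟩ := hδmem Q hQ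
      intro i
      have : A.mulVec (fun k => ((Pi.single j 1 : Fin m → ℕ) k : ℤ)) i = A i j := by
        simp [Matrix.mulVec, dotProduct, Pi.single_apply]
      rw [this]
      exact hcon j hj1 i
  have hle := hmin γ' hne' hsum' hsat'
  have hmδ : (δ.map fun Q : Fin m → ℕ => (∑ j, Q j) - 1).sum = 0 := by
    apply Multiset.sum_eq_zero
    intro x hx
    rw [Multiset.mem_map] at hx
    obtain ⟨Q, hQ, rfl⟩ := hx
    obtain ⟨j, _, rfl⟩ := hδmem Q hQ
    simp [Pi.single_apply]
  have hmγ : merges γ = ((∑ j, P j) - 1) + merges (γ.erase P) := by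
    rw [hcons]; simp [merges]
  have hmγ' : merges γ' = merges (γ.erase P) := by
    rw [hγ']
    unfold merges
    rw [Multiset.map_add, Multiset.sum_add, hmδ]
    exact add_zero _
  rw [hmγ, hmγ'] at hle
  set s := ∑ j, P j with hs
  set e := merges (γ.erase P) with he
  clear_value s e
  clear * - hle h2 hmγ hmγ'
  omega
end

section
/- The total count of limiting monomers bounds the number of non-singleton polymers in a stable configuration: if γ is a saturated configuration of T minimizing the number of merges m(γ) among all saturated configurations of T, then the number of polymers P ∈ γ with |P| ≥ 2 (counted with multiplicity) is at most ∑_{j limiting} T j, the total count in T of monomer types j for which A i j < 0 for some i. (This justifies the choice B = |T_L| as an upper bound on the number of non-singleton polymers in the integer programming formulation.) -/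
lemma selfSat_of_support {m n : ℕ} (A : Matrix (Fin n) (Fin m) ℤ) (p : Fin m → ℕ)
    (h : ∀ j, p j ≠ 0 → ∀ i, 0 ≤ A i j) : SelfSaturated A p := by
  intro i
  simp only [Matrix.mulVec, dotProduct]
  apply Finset.sum_nonneg
  intro j _
  by_cases hj : p j = 0
  · simp [hj]
  · exact mul_nonneg (h j hj i) (by positivity)

/-- In a merge-minimal saturated configuration, the number of non-singleton polymers
(counted with multiplicity) is at most the total count of limiting monomers in T. -/
theorem stmt9 {m n : ℕ} (A : Matrix (Fin n) (Fin m) ℤ) (T : Fin m → ℕ)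
    (hT : SelfSaturated A T)
    (γ : Multiset (Fin m → ℕ))
    (hne : ∀ P ∈ γ, P ≠ 0) (hsum : γ.sum = T)
    (hsat : ∀ P ∈ γ, SelfSaturated A P)
    (hmin : ∀ γ' : Multiset (Fin m → ℕ),
      (∀ P ∈ γ', P ≠ 0) → γ'.sum = T → (∀ P ∈ γ', SelfSaturated A P) →
      merges γ ≤ merges γ') :
    Multiset.card (γ.filter (fun P => 2 ≤ ∑ j, P j)) ≤
      ∑ j ∈ Finset.univ.filter (fun j => ∃ i : Fin n, A i j < 0), T j := by
  classical
  set L := Finset.univ.filter (fun j => ∃ i : Fin n, A i j < 0) with hL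
  have key : ∀ P ∈ γ, 2 ≤ ∑ j, P j → 1 ≤ ∑ j ∈ L, P j := by
    intro P hP hsize
    by_contra hcon
    push_neg at hcon
    have hzero : ∀ j ∈ L, P j = 0 := by
      intro j hj
      by_contra h0
      have h1 : 1 ≤ P j := Nat.one_le_iff_ne_zero.mpr h0
      have h2 : P j ≤ ∑ j ∈ L, P j :=
        Finset.single_le_sum (f := fun j => P j) (fun _ _ => Nat.zero_le _) hj
      omega
    have hsupp : ∀ j, P j ≠ 0 → ∀ i, 0 ≤ A i j := by
      intro j hj i
      by_contra hneg
      push_neg at hneg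
      exact hj (hzero j (by simp [hL]; exact ⟨i, hneg⟩))
    obtain ⟨j0, hj0⟩ : ∃ j0, P j0 ≠ 0 := by
      by_contra h
      push_neg at h
      simp [h] at hsize
    set q : Fin m → ℕ := Pi.single j0 1 with hq
    set r : Fin m → ℕ := fun j => P j - q j with hr
    have hqle : ∀ j, q j ≤ P j := by
      intro j
      by_cases h : j = j0
      · subst h; simp [hq]; omega
      · simp [hq, Pi.single_eq_of_ne h]
    have hPqr : P = q + r := by
      funext j
      have := hqle j
      simp only [Pi.add_apply, hr]
      omega
    have hqsum : ∑ j, q j = 1 := by simp [hq]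
    have hrsum : ∑ j, r j = (∑ j, P j) - 1 := by
      have h1 : ∑ j, P j = (∑ j, q j) + (∑ j, r j) := by
        rw [hPqr, ← Finset.sum_add_distrib]; rfl
      omega
    have hqne : q ≠ 0 := by
      intro h
      have := congrFun h j0
      simp [hq] at this
    have hrne : r ≠ 0 := by
      intro h
      have : ∑ j, r j = 0 := by rw [h]; simp
      omega
    have hqsat : SelfSaturated A q := by
      apply selfSat_of_support
      intro j hj i
      have hjj : j = j0 := by
        by_contra hne'
        simp [hq, Pi.single_eq_of_ne hne'] at hj
      subst hjj
      exact hsupp j hj0 i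
    have hrsat : SelfSaturated A r := by
      apply selfSat_of_support
      intro j hj i
      have : P j ≠ 0 := by
        have := hqle j
        simp only [hr] at hj
        omega
      exact hsupp j this i
    set γ' : Multiset (Fin m → ℕ) := q ::ₘ r ::ₘ γ.erase P with hγ'
    have hγeq : γ = P ::ₘ γ.erase P := (Multiset.cons_erase hP).symm
    have hne' : ∀ P' ∈ γ', P' ≠ 0 := by
      intro P' hP'
      simp only [hγ', Multiset.mem_cons] at hP'
      rcases hP' with h | h | h
      · subst h; exact hqne
      · subst h; exact hrne
      · exact hne P' (Multiset.mem_of_mem_erase h)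
    have hsum' : γ'.sum = T := by
      rw [hγ', Multiset.sum_cons, Multiset.sum_cons, ← add_assoc, ← hPqr,
        ← Multiset.sum_cons, Multiset.cons_erase hP, hsum]
    have hsat' : ∀ P' ∈ γ', SelfSaturated A P' := by
      intro P' hP'
      simp only [hγ', Multiset.mem_cons] at hP'
      rcases hP' with h | h | h
      · subst h; exact hqsat
      · subst h; exact hrsat
      · exact hsat P' (Multiset.mem_of_mem_erase h)
    have hle := hmin γ' hne' hsum' hsat'
    have hm1 : merges γ = ((∑ j, P j) - 1) + merges (γ.erase P) := by
      rw [hγeq]; simp [merges]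
    have hm2 : merges γ' = ((∑ j, q j) - 1) + (((∑ j, r j) - 1) + merges (γ.erase P)) := by
      rw [hγ']; simp [merges, add_assoc]
    omega
  have count1 : ∀ γ₀ : Multiset (Fin m → ℕ),
      (∀ P ∈ γ₀, 2 ≤ ∑ j, P j → 1 ≤ ∑ j ∈ L, P j) →
      Multiset.card (γ₀.filter (fun P => 2 ≤ ∑ j, P j)) ≤
        (γ₀.map (fun P => ∑ j ∈ L, P j)).sum := by
    intro γ₀
    induction γ₀ using Multiset.induction with
    | empty => simp
    | cons a s ih =>
      intro h
      have h2 := ih (fun P hP => h P (Multiset.mem_cons_of_mem hP))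
      by_cases ha : 2 ≤ ∑ j, a j
      · have h1 := h a (Multiset.mem_cons_self a s) ha
        rw [Multiset.filter_cons_of_pos (p := fun P => 2 ≤ ∑ j : Fin m, P j) s ha,
          Multiset.card_cons, Multiset.map_cons, Multiset.sum_cons, add_comm]
        exact Nat.add_le_add h1 h2
      · rw [Multiset.filter_cons_of_neg (p := fun P => 2 ≤ ∑ j : Fin m, P j) s ha,
          Multiset.map_cons, Multiset.sum_cons]
        exact h2.trans (Nat.le_add_left _ _)
  have count2 : ∀ γ₀ : Multiset (Fin m → ℕ),
      (γ₀.map (fun P => ∑ j ∈ L, P j)).sum = ∑ j ∈ L, γ₀.sum j := by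
    intro γ₀
    induction γ₀ using Multiset.induction with
    | empty => simp
    | cons a s ih =>
      simp only [Multiset.map_cons, Multiset.sum_cons, ih, Pi.add_apply,
        Finset.sum_add_distrib]
  calc Multiset.card (γ.filter (fun P => 2 ≤ ∑ j, P j))
      ≤ (γ.map (fun P => ∑ j ∈ L, P j)).sum := count1 γ key
    _ = ∑ j ∈ L, γ.sum j := count2 γ
    _ = ∑ j ∈ L, T j := by rw [hsum]
end

section
/- Correctness of the lexicographic symmetry-breaking constraints: let B m C : ℕ with C ≥ 1, and let Count : Fin B → Fin m → ℕ satisfy Count j i ≤ C − 1 for all i, j. Then the following are equivalent: (a) the columns are lexicographically non-increasing, i.e., for every j with 1 ≤ j ≤ B − 1, the vector (Count (j−1) 0, …, Count (j−1) (m−1)) is greater than or equal to (Count j 0, …, Count j (m−1)) in the lexicographic order determined by the ordering of indices 0 < 1 < … < m−1; (b) there exists Tied : Fin B → Fin (m+1) → ℕ taking values in {0,1} with Tied j 0 = 1 for all j, such that for all i with 1 ≤ i ≤ m and all j with 1 ≤ j ≤ B − 1: Tied j i ≤ Tied j (i−1); Count (j−1) (i−1) − Count j (i−1) ≤ C·(1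 − Tied j i); Count (j−1) (i−1) − Count j (i−1) ≥ −C·(1 − Tied j i); and Count (j−1) (i−1) − Count j (i−1) ≥ 1 − C·(1 + Tied j i − Tied j (i−1)) (all inequalities read in ℤ). -/
/-- `u` is greater than or equal to `v` in the lexicographic order on `Fin m → ℕ`
determined by the ordering `0 < 1 < ⋯ < m − 1` of indices. -/
def LexGE {m : ℕ} (u v : Fin m → ℕ) : Prop :=
  u = v ∨ ∃ i : Fin m, (∀ h : Fin m, h < i → u h = v h) ∧ v i < u i

/-- Correctness of the lexicographic symmetry-breaking constraints: with all entries of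
`Count` bounded by `C − 1`, consecutive columns of `Count` are lexicographically
non-increasing iff there exist Boolean `Tied` variables (with `Tied j 0 = 1`) satisfying
the linear constraints (8)–(11) of the paper. -/
theorem stmt10 (B m C : ℕ) (hC : 1 ≤ C)
    (Count : Fin B → Fin m → ℕ)
    (hBound : ∀ (j : Fin B) (i : Fin m), Count j i ≤ C - 1) :
    (∀ (j : ℕ) (hj : j + 1 < B),
        LexGE (Count ⟨j, Nat.lt_of_succ_lt hj⟩) (Count ⟨j + 1, hj⟩)) ↔
    (∃ Tied : Fin B → Fin (m + 1) → ℕ,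
        (∀ j i, Tied j i ≤ 1) ∧
        (∀ j, Tied j ⟨0, Nat.succ_pos m⟩ = 1) ∧
        (∀ (i : ℕ) (hi : i < m) (j : ℕ) (hj : j + 1 < B),
          (Tied ⟨j + 1, hj⟩ ⟨i + 1, Nat.succ_lt_succ hi⟩ ≤
            Tied ⟨j + 1, hj⟩ ⟨i, Nat.lt_succ_of_lt hi⟩) ∧
          ((Count ⟨j, Nat.lt_of_succ_lt hj⟩ ⟨i, hi⟩ : ℤ) -
              (Count ⟨j + 1, hj⟩ ⟨i, hi⟩ : ℤ) ≤
            (C : ℤ) * (1 - (Tied ⟨j + 1, hj⟩ ⟨i + 1, Nat.succ_lt_succ hi⟩ : ℤ))) ∧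
          (-((C : ℤ) * (1 - (Tied ⟨j + 1, hj⟩ ⟨i + 1, Nat.succ_lt_succ hi⟩ : ℤ))) ≤
            (Count ⟨j, Nat.lt_of_succ_lt hj⟩ ⟨i, hi⟩ : ℤ) -
              (Count ⟨j + 1, hj⟩ ⟨i, hi⟩ : ℤ)) ∧
          (1 - (C : ℤ) * (1 + (Tied ⟨j + 1, hj⟩ ⟨i + 1, Nat.succ_lt_succ hi⟩ : ℤ)
                - (Tied ⟨j + 1, hj⟩ ⟨i, Nat.lt_succ_of_lt hi⟩ : ℤ)) ≤
            (Count ⟨j, Nat.lt_of_succ_lt hj⟩ ⟨i, hi⟩ : ℤ) -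
              (Count ⟨j + 1, hj⟩ ⟨i, hi⟩ : ℤ)))) := by
  classical
  constructor
  · -- forward direction
    intro hlex
    refine ⟨fun j i =>
      if (∀ k : Fin m, (k : ℕ) < (i : ℕ) → (j : ℕ) ≠ 0 →
          Count ⟨(j : ℕ) - 1, Nat.lt_of_le_of_lt (Nat.sub_le _ _) j.isLt⟩ k = Count j k)
        then 1 else 0, ?_, ?_, ?_⟩
    · intro j i; dsimp only; split <;> omega
    · intro j
      dsimp only
      rw [if_pos]
      intro k hk
      simp at hk
    · intro i hi j hj
      dsimp only
      have hsub : j + 1 - 1 < B := Nat.lt_of_le_of_lt (Nat.sub_le _ _) hj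
      have hQ : ∀ n : ℕ, (∀ k : Fin m, (k : ℕ) < n → j + 1 ≠ 0 →
            Count ⟨j + 1 - 1, hsub⟩ k = Count ⟨j + 1, hj⟩ k) ↔
          (∀ k : Fin m, (k : ℕ) < n →
            Count ⟨j, Nat.lt_of_succ_lt hj⟩ k = Count ⟨j + 1, hj⟩ k) :=
        fun n => ⟨fun h k hk => h k hk (Nat.succ_ne_zero j), fun h k hk _ => h k hk⟩
      have hbm : (Count ⟨j, Nat.lt_of_succ_lt hj⟩ ⟨i, hi⟩ : ℤ) ≤ (C : ℤ) - 1 := by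
        have h := hBound ⟨j, Nat.lt_of_succ_lt hj⟩ ⟨i, hi⟩
        omega
      have hb1 : (Count ⟨j + 1, hj⟩ ⟨i, hi⟩ : ℤ) ≤ (C : ℤ) - 1 := by
        have h := hBound ⟨j + 1, hj⟩ ⟨i, hi⟩
        omega
      have hnneg1 : (0 : ℤ) ≤ (Count ⟨j, Nat.lt_of_succ_lt hj⟩ ⟨i, hi⟩ : ℤ) :=
        Int.natCast_nonneg _
      have hnneg2 : (0 : ℤ) ≤ (Count ⟨j + 1, hj⟩ ⟨i, hi⟩ : ℤ) := Int.natCast_nonneg _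
      by_cases h1 : ∀ k : Fin m, (k : ℕ) < i + 1 →
          Count ⟨j, Nat.lt_of_succ_lt hj⟩ k = Count ⟨j + 1, hj⟩ k
      · have h0 : ∀ k : Fin m, (k : ℕ) < i →
            Count ⟨j, Nat.lt_of_succ_lt hj⟩ k = Count ⟨j + 1, hj⟩ k :=
          fun k hk => h1 k (Nat.lt_succ_of_lt hk)
        have heq : Count ⟨j, Nat.lt_of_succ_lt hj⟩ ⟨i, hi⟩ = Count ⟨j + 1, hj⟩ ⟨i, hi⟩ :=
          h1 ⟨i, hi⟩ (Nat.lt_succ_self i)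
        have heqZ : (Count ⟨j, Nat.lt_of_succ_lt hj⟩ ⟨i, hi⟩ : ℤ) =
            (Count ⟨j + 1, hj⟩ ⟨i, hi⟩ : ℤ) := by exact_mod_cast heq
        rw [if_pos ((hQ (i + 1)).2 h1), if_pos ((hQ i).2 h0)]
        refine ⟨le_refl _, ?_, ?_, ?_⟩ <;> (push_cast; linarith [hC])
      · rw [if_neg (fun h => h1 ((hQ (i + 1)).1 h))]
        by_cases h0 : ∀ k : Fin m, (k : ℕ) < i →
            Count ⟨j, Nat.lt_of_succ_lt hj⟩ k = Count ⟨j + 1, hj⟩ k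
        · -- tied through i but not i+1: strict decrease at i
          have hne : Count ⟨j, Nat.lt_of_succ_lt hj⟩ ⟨i, hi⟩ ≠ Count ⟨j + 1, hj⟩ ⟨i, hi⟩ := by
            intro heq
            apply h1
            intro k hk
            rcases Nat.lt_or_ge (k : ℕ) i with h | h
            · exact h0 k h
            · have hki : (k : ℕ) = i := by omega
              have : k = ⟨i, hi⟩ := Fin.ext hki
              rw [this]; exact heq
          have hgt : Count ⟨j + 1, hj⟩ ⟨i, hi⟩ < Count ⟨j, Nat.lt_of_succ_lt hj⟩ ⟨i, hi⟩ := by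
            rcases hlex j hj with heq | ⟨i0, hpre, hstr⟩
            · exact absurd (congrFun heq ⟨i, hi⟩) hne
            · rcases lt_trichotomy ((i0 : ℕ)) i with h | h | h
              · exact absurd (h0 i0 h) (Nat.ne_of_gt hstr)
              · have : i0 = ⟨i, hi⟩ := Fin.ext h
                rwa [this] at hstr
              · exact absurd (hpre ⟨i, hi⟩ h) hne
          have hgtZ : (Count ⟨j + 1, hj⟩ ⟨i, hi⟩ : ℤ) <
              (Count ⟨j, Nat.lt_of_succ_lt hj⟩ ⟨i, hi⟩ : ℤ) := by exact_mod_cast hgt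
          rw [if_pos ((hQ i).2 h0)]
          refine ⟨Nat.zero_le _, ?_, ?_, ?_⟩ <;> (push_cast; linarith [hC])
        · rw [if_neg (fun h => h0 ((hQ i).1 h))]
          refine ⟨le_refl _, ?_, ?_, ?_⟩ <;> (push_cast; linarith [hC])
  · -- backward direction
    rintro ⟨Tied, hT1, hT0, hTcon⟩ j hj
    set jm : Fin B := ⟨j, Nat.lt_of_succ_lt hj⟩ with hjm
    set j1 : Fin B := ⟨j + 1, hj⟩ with hj1
    -- key: if Tied j1 i = 1 then all counts below i agree
    have key : ∀ i : ℕ, ∀ hiM : i ≤ m, Tied j1 ⟨i, Nat.lt_succ_of_le hiM⟩ = 1 →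
        ∀ k : Fin m, (k : ℕ) < i → Count jm k = Count j1 k := by
      intro i
      induction i with
      | zero => intro _ _ k hk; simp at hk
      | succ n ih =>
        intro hiM ht k hk
        have hn : n < m := hiM
        have ht' : Tied j1 ⟨n + 1, Nat.succ_lt_succ hn⟩ = 1 := ht
        have hcon := hTcon n hn j hj
        rw [← hjm, ← hj1] at hcon
        have htn : Tied j1 ⟨n, Nat.lt_succ_of_lt hn⟩ = 1 := by
          have h1 := hcon.1
          have h2 := hT1 j1 ⟨n, Nat.lt_succ_of_lt hn⟩
          rw [ht'] at h1
          omega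
        rcases Nat.lt_or_ge (k : ℕ) n with h | h
        · exact ih (le_of_lt hn) htn k h
        · have hkn : (k : ℕ) = n := by omega
          have hk2 : k = ⟨n, hn⟩ := Fin.ext hkn
          rw [hk2]
          have h9 := hcon.2.1
          have h10 := hcon.2.2.1
          rw [ht'] at h9 h10
          have : (Count jm ⟨n, hn⟩ : ℤ) = (Count j1 ⟨n, hn⟩ : ℤ) := by
            push_cast at h9 h10 ⊢
            linarith
          exact_mod_cast this
    -- now prove LexGE, by descending through the Tied values
    have main : ∀ i : ℕ, ∀ hiM : i ≤ m, Tied j1 ⟨i, Nat.lt_succ_of_le hiM⟩ = 0 →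
        LexGE (Count jm) (Count j1) := by
      intro i
      induction i with
      | zero =>
        intro hiM h0
        have := hT0 j1
        rw [show (⟨0, Nat.succ_pos m⟩ : Fin (m+1)) = ⟨0, Nat.lt_succ_of_le hiM⟩ from rfl] at this
        omega
      | succ n ih =>
        intro hiM h0
        have hn : n < m := hiM
        have h0' : Tied j1 ⟨n + 1, Nat.succ_lt_succ hn⟩ = 0 := h0
        by_cases htn : Tied j1 ⟨n, Nat.lt_succ_of_lt hn⟩ = 1
        · -- strict drop at index n
          right
          refine ⟨⟨n, hn⟩, ?_, ?_⟩
          · intro k hk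
            exact key n (le_of_lt hn) htn k hk
          · have hcon := hTcon n hn j hj
            rw [← hjm, ← hj1] at hcon
            have h11 := hcon.2.2.2
            rw [h0', htn] at h11
            push_cast at h11
            have hgtZ : (Count j1 ⟨n, hn⟩ : ℤ) < (Count jm ⟨n, hn⟩ : ℤ) := by nlinarith
            exact_mod_cast hgtZ
        · have htn0 : Tied j1 ⟨n, Nat.lt_succ_of_lt hn⟩ = 0 := by
            have := hT1 j1 ⟨n, Nat.lt_succ_of_lt hn⟩
            omega
          exact ih (le_of_lt hn) htn0
    by_cases hlast : Tied j1 ⟨m, Nat.lt_succ_self m⟩ = 1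
    · left
      funext k
      exact key m (le_refl m) hlast k k.isLt
    · have : Tied j1 ⟨m, Nat.lt_succ_self m⟩ = 0 := by
        have := hT1 j1 ⟨m, Nat.lt_succ_self m⟩
        omega
      exact main m (le_refl m) this
end

section
/- Correctness of the integer programming formulation of StableConfigs for finite TBNs: let T : Fin m → ℕ be a TBN with starred sites limiting, let L = {j : Fin m | ∃ i, A i j < 0} be the set of limiting monomer types, and let B = ∑_{j ∈ L} T j. Then the minimum over all saturated configurations γ of T of the number of merges m(γ) equals the minimum, over all families Count : Fin B → (Fin m → ℕ) satisfying (i) each Count k is self-saturated, (ii) ∑_k Count k j = T j for every j ∈ L, and (iii) ∑_k Count k j ≤ T j for every j ∉ L, of the objective ∑_k ((∑_j Count k j) − (if Count k ≠ 0 then 1 else 0)). -/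
/-- The set of limiting monomer types of A. -/
def limiting {m n : ℕ} (A : Matrix (Fin n) (Fin m) ℤ) : Finset (Fin m) :=
  Finset.univ.filter (fun j => ∃ i : Fin n, A i j < 0)

/-!
A feasible `Count` gives a saturated configuration with the same number of merges: drop the
empty slots and add every unused monomer as a singleton polymer. Unused monomers are
non-limiting, so these singletons are self-saturated, and they cost no merges.

Conversely, every polymer of a saturated configuration that contains a limiting monomer uses up
at least one of the `B` limiting monomers, so there are at most `B` such polymers. Padded with
empty slots they form a feasible `Count`; the polymers left out contain no limiting monomer, and
dropping them does not increase the number of merges.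
-/

open Finset

lemma Multiset.exists_univ_map_eq_of_card_eq {α : Type*} {σ : Multiset α} {B : ℕ}
    (h : Multiset.card σ = B) :
    ∃ f : Fin B → α, univ.val.map f = σ := by
  subst h
  obtain ⟨l, rfl⟩ : ∃ l : List α, (l : Multiset α) = σ := Quot.exists_rep σ
  exact ⟨l.get, (Fin.univ_val_map l.get).trans (congrArg _ (List.ofFn_get l))⟩

lemma Multiset.sum_filter_ne_zero {M : Type*} [AddCommMonoid M] [DecidableEq M]
    (s : Multiset M) : (s.filter (· ≠ 0)).sum = s.sum := by
  have hzero : (s.filter fun x => ¬x ≠ 0).sum = 0 :=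
    Multiset.sum_eq_zero fun x hx => not_not.1 (Multiset.mem_filter.1 hx).2
  conv_rhs => rw [← Multiset.filter_add_not (· ≠ 0) s, Multiset.sum_add, hzero, add_zero]

lemma Multiset.card_le_sum_sum_apply {ι : Type*} {s : Finset ι} {μ : Multiset (ι → ℕ)}
    (h : ∀ P ∈ μ, ∃ j ∈ s, P j ≠ 0) : Multiset.card μ ≤ ∑ j ∈ s, μ.sum j :=
  calc Multiset.card μ = (μ.map fun _ => 1).sum := by simp
    _ ≤ (μ.map fun P => ∑ j ∈ s, P j).sum := Multiset.sum_map_le_sum_map _ _ fun P hP => by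
        obtain ⟨j, hj, hPj⟩ := h P hP
        exact (Nat.one_le_iff_ne_zero.2 hPj).trans
          (Finset.single_le_sum (fun _ _ => Nat.zero_le _) hj)
    _ = ∑ j ∈ s, μ.sum j := by
        simp only [Pi.multiset_sum_apply]
        exact Multiset.sum_map_sum_map μ s.val

lemma exists_isLeast_isLeast_of_subset {S₁ S₂ : Set ℕ} (hne : S₁.Nonempty) (hsub : S₂ ⊆ S₁)
    (hdom : ∀ a ∈ S₁, ∃ b ∈ S₂, b ≤ a) : ∃ N, IsLeast S₁ N ∧ IsLeast S₂ N := by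
  have hleast : IsLeast S₁ (sInf S₁) := ⟨Nat.sInf_mem hne, fun _ ha => Nat.sInf_le ha⟩
  obtain ⟨b, hb, hb_le⟩ := hdom _ hleast.1
  have hbN : b = sInf S₁ := le_antisymm hb_le (hleast.2 (hsub hb))
  exact ⟨sInf S₁, hleast, hbN ▸ hb, fun c hc => hleast.2 (hsub hc)⟩

section

variable {m n : ℕ}

lemma SelfSaturated.zero (A : Matrix (Fin n) (Fin m) ℤ) : SelfSaturated A 0 := by
  intro i
  show 0 ≤ A.mulVec 0 i
  simp

lemma selfSaturated_single_of_not_mem_limiting {A : Matrix (Fin n) (Fin m) ℤ} {j : Fin m}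
    (hj : j ∉ limiting A) : SelfSaturated A (Pi.single j 1) := by
  intro i
  simp only [limiting, mem_filter, mem_univ, true_and, not_exists, not_lt] at hj
  have hcast : (fun k => ((Pi.single j 1 : Fin m → ℕ) k : ℤ)) = Pi.single j 1 := by
    ext k
    by_cases hk : k = j <;> simp [hk]
  simpa [hcast, Matrix.mulVec_single_one] using hj i

lemma merges_add (γ δ : Multiset (Fin m → ℕ)) : merges (γ + δ) = merges γ + merges δ := by
  simp [merges]

lemma merges_eq_zero_of_forall_sum_le_one {γ : Multiset (Fin m → ℕ)}
    (h : ∀ P ∈ γ, ∑ j, P j ≤ 1) : merges γ = 0 := by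
  refine Multiset.sum_eq_zero fun k hk => ?_
  obtain ⟨P, hP, rfl⟩ := Multiset.mem_map.1 hk
  exact Nat.sub_eq_zero_of_le (h P hP)

lemma merges_filter_ne_zero (γ : Multiset (Fin m → ℕ)) :
    merges (γ.filter (· ≠ 0)) = merges γ := by
  have hzero : merges (γ.filter fun P => ¬P ≠ 0) = 0 :=
    merges_eq_zero_of_forall_sum_le_one fun P hP => by
      simp [not_not.1 (Multiset.mem_filter.1 hP).2]
  conv_rhs => rw [← Multiset.filter_add_not (· ≠ 0) γ, merges_add, hzero, add_zero]

-- As `0 - 1 = 0` in `ℕ`, the correction term of the IP objective acts like a constant `1`.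
lemma merges_univ_map {B : ℕ} (Count : Fin B → Fin m → ℕ) :
    merges (univ.val.map Count) = ∑ s, ((∑ j, Count s j) - (if Count s ≠ 0 then 1 else 0)) := by
  rw [merges, Multiset.map_map]
  refine Finset.sum_congr rfl fun s _ => ?_
  by_cases h : Count s = 0 <;> simp [h]

def singletons (R : Fin m → ℕ) : Multiset (Fin m → ℕ) :=
  ∑ j, Multiset.replicate (R j) (Pi.single j 1)

lemma mem_singletons {R : Fin m → ℕ} {P : Fin m → ℕ} (hP : P ∈ singletons R) :
    ∃ j, R j ≠ 0 ∧ P = Pi.single j 1 := by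
  obtain ⟨j, -, hj⟩ := Multiset.mem_sum.1 hP
  obtain ⟨hR, rfl⟩ := Multiset.mem_replicate.1 hj
  exact ⟨j, hR, rfl⟩

lemma sum_singletons (R : Fin m → ℕ) : (singletons R).sum = R := by
  ext j
  simp [singletons, Multiset.sum_sum, Pi.single_apply]

lemma merges_singletons (R : Fin m → ℕ) : merges (singletons R) = 0 :=
  merges_eq_zero_of_forall_sum_le_one fun P hP => by
    obtain ⟨j, -, rfl⟩ := mem_singletons hP
    simp

def IsSaturatedConfig (A : Matrix (Fin n) (Fin m) ℤ) (T : Fin m → ℕ) (γ : Multiset (Fin m → ℕ)) :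
    Prop :=
  (∀ P ∈ γ, P ≠ 0) ∧ γ.sum = T ∧ ∀ P ∈ γ, SelfSaturated A P

/-- The IP constraints, stated for the multiset `σ` of contents of the polymer slots (the columns
of `Count`). -/
def IsFeasibleSlots (A : Matrix (Fin n) (Fin m) ℤ) (T : Fin m → ℕ) (σ : Multiset (Fin m → ℕ)) :
    Prop :=
  (∀ P ∈ σ, SelfSaturated A P) ∧ (∀ j ∈ limiting A, σ.sum j = T j) ∧
    ∀ j ∉ limiting A, σ.sum j ≤ T j

section

variable {A : Matrix (Fin n) (Fin m) ℤ} {T : Fin m → ℕ}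

lemma isFeasibleSlots_univ_map_iff {B : ℕ} (Count : Fin B → Fin m → ℕ) :
    IsFeasibleSlots A T (univ.val.map Count) ↔
      (∀ s, SelfSaturated A (Count s)) ∧ (∀ j ∈ limiting A, ∑ s, Count s j = T j) ∧
        ∀ j ∉ limiting A, ∑ s, Count s j ≤ T j := by
  have hsum (j : Fin m) : (univ.val.map Count).sum j = ∑ s, Count s j := sum_apply j univ Count
  simp only [IsFeasibleSlots, hsum, Multiset.forall_mem_map_iff, mem_val, mem_univ, true_implies]

lemma IsFeasibleSlots.exists_isSaturatedConfig {σ : Multiset (Fin m → ℕ)}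
    (hσ : IsFeasibleSlots A T σ) : ∃ γ, IsSaturatedConfig A T γ ∧ merges γ = merges σ := by
  obtain ⟨hsat, hL, hN⟩ := hσ
  have hle : σ.sum ≤ T := fun j => by
    by_cases hj : j ∈ limiting A
    exacts [(hL j hj).le, hN j hj]
  refine ⟨σ.filter (· ≠ 0) + singletons (T - σ.sum), ⟨?_, ?_, ?_⟩, ?_⟩
  · intro P hP
    rcases Multiset.mem_add.1 hP with hP | hP
    · exact (Multiset.mem_filter.1 hP).2
    · obtain ⟨j, -, rfl⟩ := mem_singletons hP
      simp
  · rw [Multiset.sum_add, Multiset.sum_filter_ne_zero, sum_singletons, add_tsub_cancel_of_le hle]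
  · intro P hP
    rcases Multiset.mem_add.1 hP with hP | hP
    · exact hsat P (Multiset.mem_of_mem_filter hP)
    · obtain ⟨j, hj, rfl⟩ := mem_singletons hP
      exact selfSaturated_single_of_not_mem_limiting fun hjL => hj (by simp [hL j hjL])
  · rw [merges_add, merges_singletons, add_zero, merges_filter_ne_zero]

lemma exists_isFeasibleSlots_of_sum_eq {γ : Multiset (Fin m → ℕ)} (hsum : γ.sum = T)
    (hsat : ∀ P ∈ γ, SelfSaturated A P) :
    ∃ σ, IsFeasibleSlots A T σ ∧ Multiset.card σ = ∑ j ∈ limiting A, T j ∧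
      merges σ ≤ merges γ := by
  subst hsum
  set γL := γ.filter fun P => ∃ j ∈ limiting A, P j ≠ 0
  set γN := γ.filter fun P => ¬∃ j ∈ limiting A, P j ≠ 0
  have hsplit : γL + γN = γ := Multiset.filter_add_not _ γ
  have hsum (j : Fin m) : γ.sum j = γL.sum j + γN.sum j := by
    rw [← hsplit, Multiset.sum_add, Pi.add_apply]
  have hN (j : Fin m) (hj : j ∈ limiting A) : γN.sum j = 0 := by
    rw [Pi.multiset_sum_apply]
    refine Multiset.sum_eq_zero fun k hk => ?_
    obtain ⟨P, hP, rfl⟩ := Multiset.mem_map.1 hk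
    by_contra hPj
    exact (Multiset.mem_filter.1 hP).2 ⟨j, hj, hPj⟩
  have hcard : Multiset.card γL ≤ ∑ j ∈ limiting A, γ.sum j :=
    (Multiset.card_le_sum_sum_apply fun P hP => (Multiset.mem_filter.1 hP).2).trans
      (sum_le_sum fun j _ => (hsum j).symm ▸ Nat.le_add_right _ _)
  have hzeros (k : ℕ) : merges (Multiset.replicate k (0 : Fin m → ℕ)) = 0 :=
    merges_eq_zero_of_forall_sum_le_one fun P hP => by simp [Multiset.eq_of_mem_replicate hP]
  refine ⟨γL + Multiset.replicate (∑ j ∈ limiting A, γ.sum j - Multiset.card γL) 0,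
    ⟨?_, fun j hj => ?_, fun j _ => ?_⟩, ?_, ?_⟩
  · intro P hP
    rcases Multiset.mem_add.1 hP with hP | hP
    · exact hsat P (Multiset.mem_of_mem_filter hP)
    · exact Multiset.eq_of_mem_replicate hP ▸ SelfSaturated.zero A
  · simp [hsum j, hN j hj]
  · simp [hsum j]
  · rw [Multiset.card_add, Multiset.card_replicate, Nat.add_sub_cancel' hcard]
  · rw [merges_add, hzeros, add_zero, ← hsplit, merges_add]
    exact Nat.le_add_right _ _

end

end

/-- Correctness of the IP formulation of StableConfigs for finite TBNs: with
B = ∑_{j limiting} T j polymer slots, the minimum number of merges over saturated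
configurations of T equals the minimum of the IP objective over all feasible Count
assignments. -/
theorem stmt12 {m n : ℕ} (A : Matrix (Fin n) (Fin m) ℤ) (T : Fin m → ℕ)
    (hT : SelfSaturated A T) :
    ∃ N : ℕ,
      IsLeast {k : ℕ | ∃ γ : Multiset (Fin m → ℕ),
        (∀ P ∈ γ, P ≠ 0) ∧ γ.sum = T ∧ (∀ P ∈ γ, SelfSaturated A P) ∧
        merges γ = k} N ∧
      IsLeast {k : ℕ | ∃ Count : Fin (∑ j ∈ limiting A, T j) → Fin m → ℕ,
        (∀ s, SelfSaturated A (Count s)) ∧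
        (∀ j ∈ limiting A, (∑ s, Count s j) = T j) ∧
        (∀ j ∉ limiting A, (∑ s, Count s j) ≤ T j) ∧
        (∑ s, ((∑ j, Count s j) - (if Count s ≠ 0 then 1 else 0))) = k} N := by
  apply exists_isLeast_isLeast_of_subset
  · have hT' : IsFeasibleSlots A T {T} := ⟨by simpa using hT, by simp, by simp⟩
    obtain ⟨γ, ⟨hne, hsum, hsat⟩, -⟩ := hT'.exists_isSaturatedConfig
    exact ⟨_, γ, hne, hsum, hsat, rfl⟩
  · rintro _ ⟨Count, hsat, hL, hN, rfl⟩
    obtain ⟨γ, ⟨hne, hsum, hsat⟩, hmerges⟩ :=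
      ((isFeasibleSlots_univ_map_iff Count).2 ⟨hsat, hL, hN⟩).exists_isSaturatedConfig
    exact ⟨γ, hne, hsum, hsat, hmerges.trans (merges_univ_map Count)⟩
  · rintro _ ⟨γ, -, hsum, hsat, rfl⟩
    obtain ⟨σ, hσ, hcard, hle⟩ := exists_isFeasibleSlots_of_sum_eq hsum hsat
    obtain ⟨Count, rfl⟩ := Multiset.exists_univ_map_eq_of_card_eq hcard
    obtain ⟨hsat, hL, hN⟩ := (isFeasibleSlots_univ_map_iff Count).1 hσ
    exact ⟨_, ⟨Count, hsat, hL, hN, rfl⟩, merges_univ_map Count ▸ hle⟩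
end
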